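/- arXiv:1505.05776 — 5 statements merged into one kernel-verified Lean document; each statement's English description precedes it below -/
import Mathlib

section
/- Let λ : 𝕋^d → ℝ be continuous with 0 < λ_b ≤ q < 1 and λ_b ≥ 1/D (D ≥ 1) for all b, Hölder with exponent α, and let Q : 𝕋^d × [0,1] → ℝ be Hölder in b with exponent α uniformly in x, Lipschitz in x uniformly in b, and bounded. Assume 0 < α and θ := μ^α q < 1, where μ > 1 is such that dist(Ab, Ab') ≤ μ dist(b,b') for all b,b'. Then the solution h = LQ of the normalized homological equation, h(b,x) = −Σ_{n=0}^{∞} Π_n(b) Q(F₀^n(b,x))/λ_{A^n b}, is Hölder in b with the same exponent α: there is a constant C_h (depending only on ||Q||_C, the Hölder constant of Q, the Lipschitz-in-x constant of Q, the Hölder constant of λ, D, q, μ, α) such that |h(b₁,x) − h(b₂,x)| ≤ C_h dist(b₁,b₂)^α for all b₁,b₂ ∈ 𝕋^d and x ∈ [0,1]. -/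
open Set Function

noncomputable section

/-- The `d`-dimensional torus `ℝ^d/ℤ^d` with the (sup-)product metric. -/
abbrev Torus (d : ℕ) := Fin d → AddCircle (1 : ℝ)

/-- `Π_n(b) = λ_b λ_{Ab} ⋯ λ_{A^{n-1}b}` (and `Π_0(b) = 1`). -/
def PiProd {d : ℕ} (A : Torus d → Torus d) (lam : Torus d → ℝ) (n : ℕ) (b : Torus d) : ℝ :=
  ∏ k ∈ Finset.range n, lam (A^[k] b)

/-- The solution of the normalized homological equation,
`h = LQ`, `h(b,x) = −Σ_{n≥0} Π_n(b) Q(A^n b, Π_n(b) x)/λ_{A^n b}`. -/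
def homSol {d : ℕ} (A : Torus d → Torus d) (lam : Torus d → ℝ) (Q : Torus d → ℝ → ℝ) :
    Torus d → ℝ → ℝ :=
  fun b x => -∑' n : ℕ, PiProd A lam n b * Q (A^[n] b) (PiProd A lam n b * x) / lam (A^[n] b)

/-!
Write `M = μ^α`, `θ = M q` and `ε = dist(b₁,b₂)^α`. Since `A` expands distances by at most `μ`,
`dist(Aᵏb₁, Aᵏb₂)^α ≤ Mᵏ ε`, so the `k`-th factor of `Π_n` moves by at most `Clam Mᵏ ε` while all
factors stay below `q`; telescoping gives `|Π_n(b₁) - Π_n(b₂)| ≤ Clam ε θⁿ / (q (M - 1))`.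
Together with the bounds on `Q` and on `1/λ ≤ D`, the `n`-th terms of the series for `h` at `b₁`
and `b₂` differ by `O(ε θⁿ)`, and `θ < 1` sums these differences to `O(ε)`.
-/

theorem dist_iterate_le_pow_mul {X : Type*} [PseudoMetricSpace X] {f : X → X} {μ : ℝ}
    (hμ : 0 ≤ μ) (hf : ∀ x y, dist (f x) (f y) ≤ μ * dist x y) (n : ℕ) (x y : X) :
    dist (f^[n] x) (f^[n] y) ≤ μ ^ n * dist x y := by
  induction n with
  | zero => simp
  | succ n ih =>
    rw [iterate_succ_apply', iterate_succ_apply', pow_succ', mul_assoc]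
    exact (hf _ _).trans (mul_le_mul_of_nonneg_left ih hμ)

theorem dist_iterate_rpow_le {X : Type*} [PseudoMetricSpace X] {f : X → X} {μ α : ℝ}
    (hμ : 0 ≤ μ) (hα : 0 ≤ α) (hf : ∀ x y, dist (f x) (f y) ≤ μ * dist x y) (n : ℕ) (x y : X) :
    dist (f^[n] x) (f^[n] y) ^ α ≤ (μ ^ α) ^ n * dist x y ^ α :=
  calc dist (f^[n] x) (f^[n] y) ^ α ≤ (μ ^ n * dist x y) ^ α :=
        Real.rpow_le_rpow dist_nonneg (dist_iterate_le_pow_mul hμ hf n x y) hα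
    _ = (μ ^ α) ^ n * dist x y ^ α := by
        rw [Real.mul_rpow (pow_nonneg hμ n) dist_nonneg, Real.rpow_pow_comm hμ]

theorem abs_prod_range_sub_prod_range_le {a b : ℕ → ℝ} {q M c : ℝ} (hq : 0 < q) (hM : 1 < M)
    (ha : ∀ k, |a k| ≤ q) (hb : ∀ k, |b k| ≤ q) (hab : ∀ k, |a k - b k| ≤ c * M ^ k) (n : ℕ) :
    |∏ k ∈ Finset.range n, a k - ∏ k ∈ Finset.range n, b k| ≤
      c / (q * (M - 1)) * (M * q) ^ n := by
  have hc : 0 ≤ c := by simpa using (abs_nonneg _).trans (hab 0)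
  have hM1 : 0 < M - 1 := sub_pos.2 hM
  induction n with
  | zero => simp only [Finset.prod_range_zero, sub_self, abs_zero, pow_zero, mul_one]; positivity
  | succ n ih =>
    have hprod_b : |∏ k ∈ Finset.range n, b k| ≤ q ^ n := by
      rw [Finset.abs_prod]
      simpa using Finset.prod_le_prod (s := Finset.range n) (fun k _ => abs_nonneg (b k))
        (fun k _ => hb k)
    rw [Finset.prod_range_succ, Finset.prod_range_succ]
    calc |(∏ k ∈ Finset.range n, a k) * a n - (∏ k ∈ Finset.range n, b k) * b n|
        = |(∏ k ∈ Finset.range n, a k - ∏ k ∈ Finset.range n, b k) * a n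
            + (∏ k ∈ Finset.range n, b k) * (a n - b n)| := by congr 1; ring
      _ ≤ c / (q * (M - 1)) * (M * q) ^ n * q + q ^ n * (c * M ^ n) := by
        refine (abs_add_le _ _).trans ?_
        rw [abs_mul, abs_mul]
        gcongr
        exacts [ha n, hab n]
      _ = c / (q * (M - 1)) * (M * q) ^ (n + 1) := by
        field_simp
        ring

theorem abs_sub_le_of_holder_of_lipschitz {X : Type*} [PseudoMetricSpace X] {Q : X → ℝ → ℝ}
    {CQ LQ α : ℝ}
    (hQHol : ∀ b₁ b₂ : X, ∀ x ∈ Icc (0:ℝ) 1, |Q b₁ x - Q b₂ x| ≤ CQ * dist b₁ b₂ ^ α)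
    (hQLip : ∀ b : X, ∀ x ∈ Icc (0:ℝ) 1, ∀ y ∈ Icc (0:ℝ) 1, |Q b x - Q b y| ≤ LQ * |x - y|)
    {b₁ b₂ : X} {y₁ y₂ : ℝ} (hy₁ : y₁ ∈ Icc (0:ℝ) 1) (hy₂ : y₂ ∈ Icc (0:ℝ) 1) :
    |Q b₁ y₁ - Q b₂ y₂| ≤ CQ * dist b₁ b₂ ^ α + LQ * |y₁ - y₂| :=
  (abs_sub_le _ (Q b₂ y₁) _).trans (add_le_add (hQHol _ _ _ hy₁) (hQLip _ _ hy₁ _ hy₂))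

theorem abs_mul_div_sub_mul_div_le {P₁ P₂ u₁ u₂ l₁ l₂ D : ℝ} (hP₂ : 0 ≤ P₂)
    (hl₁ : 0 < l₁) (hl₂ : 0 < l₂) (hl₁D : l₁⁻¹ ≤ D) (hl₂D : l₂⁻¹ ≤ D) :
    |P₁ * u₁ / l₁ - P₂ * u₂ / l₂| ≤
      D * (|P₁ - P₂| * |u₁| + P₂ * |u₁ - u₂| + D * P₂ * |u₂| * |l₁ - l₂|) := by
  have hsplit : P₁ * u₁ / l₁ - P₂ * u₂ / l₂ =
      ((P₁ - P₂) * u₁ + P₂ * (u₁ - u₂)) * l₁⁻¹ + P₂ * u₂ * (l₂ - l₁) * l₁⁻¹ * l₂⁻¹ := by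
    field_simp
    ring
  rw [hsplit]
  refine (abs_add_le _ _).trans ?_
  simp only [abs_mul, abs_inv, abs_of_pos hl₁, abs_of_pos hl₂, abs_of_nonneg hP₂,
    abs_sub_comm l₂ l₁]
  have hD : 0 ≤ D := (inv_pos.2 hl₁).le.trans hl₁D
  calc |(P₁ - P₂) * u₁ + P₂ * (u₁ - u₂)| * l₁⁻¹ + P₂ * |u₂| * |l₁ - l₂| * l₁⁻¹ * l₂⁻¹
      ≤ (|P₁ - P₂| * |u₁| + P₂ * |u₁ - u₂|) * D + P₂ * |u₂| * |l₁ - l₂| * D * D := by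
        gcongr
        refine (abs_add_le _ _).trans ?_
        rw [abs_mul, abs_mul, abs_of_nonneg hP₂]
    _ = D * (|P₁ - P₂| * |u₁| + P₂ * |u₁ - u₂| + D * P₂ * |u₂| * |l₁ - l₂|) := by ring

theorem inv_le_of_one_div_le {D : ℝ} (hD : 0 < D) {l : ℝ} (h : 1 / D ≤ l) : l⁻¹ ≤ D :=
  inv_le_of_inv_le₀ hD (by rwa [← one_div])

theorem abs_tsum_sub_tsum_le_of_geometric {f g : ℕ → ℝ} {C θ : ℝ} (hf : Summable f)
    (hg : Summable g) (hθ0 : 0 ≤ θ) (hθ1 : θ < 1) (h : ∀ n, |f n - g n| ≤ C * θ ^ n) :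
    |∑' n, f n - ∑' n, g n| ≤ C / (1 - θ) := by
  rw [← hf.tsum_sub hg, div_eq_mul_inv]
  exact tsum_of_norm_bounded ((hasSum_geometric_of_lt_one hθ0 hθ1).mul_left C)
    fun n => (Real.norm_eq_abs _).trans_le (h n)

section

variable {d : ℕ} {A : Torus d → Torus d} {lam : Torus d → ℝ} {Q : Torus d → ℝ → ℝ}
  {μ q D α Clam QC CQ LQ : ℝ}

theorem PiProd_pos (hlam : ∀ b, 0 < lam b) (n : ℕ) (b : Torus d) : 0 < PiProd A lam n b :=
  Finset.prod_pos fun _ _ => hlam _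

theorem PiProd_le_pow (hlam : ∀ b, 0 < lam b ∧ lam b ≤ q) (n : ℕ) (b : Torus d) :
    PiProd A lam n b ≤ q ^ n := by
  simpa [PiProd] using Finset.prod_le_prod (s := Finset.range n) (fun k _ => (hlam (A^[k] b)).1.le)
    (fun k _ => (hlam (A^[k] b)).2)

theorem PiProd_mul_mem_Icc (hlam : ∀ b, 0 < lam b ∧ lam b ≤ q) (hq : q ≤ 1) {x : ℝ}
    (hx : x ∈ Icc (0:ℝ) 1) (n : ℕ) (b : Torus d) : PiProd A lam n b * x ∈ Icc (0:ℝ) 1 :=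
  ⟨mul_nonneg (PiProd_pos (fun b => (hlam b).1) n b).le hx.1,
    mul_le_one₀ ((PiProd_le_pow hlam n b).trans
      (pow_le_one₀ ((hlam b).1.le.trans (hlam b).2) hq)) hx.1 hx.2⟩

theorem abs_PiProd_sub_le (hμ : 1 < μ) (hα : 0 < α)
    (hA : ∀ b₁ b₂, dist (A b₁) (A b₂) ≤ μ * dist b₁ b₂) (hlam : ∀ b, 0 < lam b ∧ lam b ≤ q)
    (hClam : 0 ≤ Clam) (hlamHol : ∀ b₁ b₂, |lam b₁ - lam b₂| ≤ Clam * dist b₁ b₂ ^ α)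
    (n : ℕ) (b₁ b₂ : Torus d) :
    |PiProd A lam n b₁ - PiProd A lam n b₂| ≤
      Clam / (q * (μ ^ α - 1)) * dist b₁ b₂ ^ α * (μ ^ α * q) ^ n := by
  have hq : 0 < q := (hlam b₁).1.trans_le (hlam b₁).2
  have habs : ∀ b, |lam b| ≤ q := fun b => (abs_of_pos (hlam b).1).trans_le (hlam b).2
  have hstep : ∀ k, |lam (A^[k] b₁) - lam (A^[k] b₂)| ≤ Clam * dist b₁ b₂ ^ α * (μ ^ α) ^ k :=
    fun k => calc |lam (A^[k] b₁) - lam (A^[k] b₂)|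
        ≤ Clam * ((μ ^ α) ^ k * dist b₁ b₂ ^ α) := (hlamHol _ _).trans <|
          mul_le_mul_of_nonneg_left (dist_iterate_rpow_le (by linarith) hα.le hA k b₁ b₂) hClam
      _ = Clam * dist b₁ b₂ ^ α * (μ ^ α) ^ k := by ring
  calc |PiProd A lam n b₁ - PiProd A lam n b₂|
      ≤ Clam * dist b₁ b₂ ^ α / (q * (μ ^ α - 1)) * (μ ^ α * q) ^ n :=
        abs_prod_range_sub_prod_range_le hq (Real.one_lt_rpow hμ hα)
          (fun k => habs (A^[k] b₁)) (fun k => habs (A^[k] b₂)) hstep n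
    _ = Clam / (q * (μ ^ α - 1)) * dist b₁ b₂ ^ α * (μ ^ α * q) ^ n := by
        rw [mul_div_right_comm]

variable (A lam Q) in
def homSolTerm (b : Torus d) (x : ℝ) (n : ℕ) : ℝ :=
  PiProd A lam n b * Q (A^[n] b) (PiProd A lam n b * x) / lam (A^[n] b)

theorem homSol_eq_neg_tsum (b : Torus d) (x : ℝ) :
    homSol A lam Q b x = -∑' n, homSolTerm A lam Q b x n :=
  rfl

theorem abs_homSolTerm_le (hD : 0 < D) (hlam : ∀ b, 0 < lam b ∧ lam b ≤ q) (hq : q ≤ 1)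
    (hDlow : ∀ b, 1 / D ≤ lam b) (hQC : ∀ b, ∀ x ∈ Icc (0:ℝ) 1, |Q b x| ≤ QC) {x : ℝ}
    (hx : x ∈ Icc (0:ℝ) 1) (b : Torus d) (n : ℕ) :
    |homSolTerm A lam Q b x n| ≤ D * QC * q ^ n := by
  have hQC0 : 0 ≤ QC := (abs_nonneg _).trans (hQC b 0 ⟨le_rfl, zero_le_one⟩)
  have hq0 : 0 ≤ q := (hlam b).1.le.trans (hlam b).2
  rw [homSolTerm, div_eq_mul_inv, abs_mul, abs_mul,
    abs_of_pos (PiProd_pos (fun b => (hlam b).1) n b), abs_of_pos (inv_pos.2 (hlam _).1)]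
  calc PiProd A lam n b * |Q (A^[n] b) (PiProd A lam n b * x)| * (lam (A^[n] b))⁻¹
      ≤ q ^ n * QC * D := by
        gcongr
        exacts [(inv_pos.2 (hlam _).1).le, PiProd_le_pow hlam n b,
          hQC _ _ (PiProd_mul_mem_Icc hlam hq hx n b),
          inv_le_of_one_div_le hD (hDlow _)]
    _ = D * QC * q ^ n := by ring

theorem summable_homSolTerm (hD : 0 < D) (hlam : ∀ b, 0 < lam b ∧ lam b ≤ q) (hq : q < 1)
    (hDlow : ∀ b, 1 / D ≤ lam b) (hQC : ∀ b, ∀ x ∈ Icc (0:ℝ) 1, |Q b x| ≤ QC) {x : ℝ}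
    (hx : x ∈ Icc (0:ℝ) 1) (b : Torus d) : Summable (homSolTerm A lam Q b x) :=
  Summable.of_norm_bounded
    ((summable_geometric_of_lt_one ((hlam b).1.le.trans (hlam b).2) hq).mul_left (D * QC))
    fun n => (Real.norm_eq_abs _).trans_le (abs_homSolTerm_le hD hlam hq.le hDlow hQC hx b n)


theorem abs_homSolTerm_sub_le (hμ : 1 < μ) (hα : 0 < α)
    (hA : ∀ b₁ b₂, dist (A b₁) (A b₂) ≤ μ * dist b₁ b₂) (hD : 0 < D)
    (hlam : ∀ b, 0 < lam b ∧ lam b ≤ q) (hq : q ≤ 1) (hDlow : ∀ b, 1 / D ≤ lam b)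
    (hClam : 0 ≤ Clam) (hlamHol : ∀ b₁ b₂, |lam b₁ - lam b₂| ≤ Clam * dist b₁ b₂ ^ α)
    (hQC : ∀ b, ∀ x ∈ Icc (0:ℝ) 1, |Q b x| ≤ QC) (hCQ : 0 ≤ CQ)
    (hQHol : ∀ b₁ b₂, ∀ x ∈ Icc (0:ℝ) 1, |Q b₁ x - Q b₂ x| ≤ CQ * dist b₁ b₂ ^ α)
    (hLQ : 0 ≤ LQ)
    (hQLip : ∀ b, ∀ x ∈ Icc (0:ℝ) 1, ∀ y ∈ Icc (0:ℝ) 1, |Q b x - Q b y| ≤ LQ * |x - y|)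
    {x : ℝ} (hx : x ∈ Icc (0:ℝ) 1) (b₁ b₂ : Torus d) (n : ℕ) :
    |homSolTerm A lam Q b₁ x n - homSolTerm A lam Q b₂ x n| ≤
      D * ((QC + LQ) * (Clam / (q * (μ ^ α - 1))) + CQ + D * QC * Clam) * dist b₁ b₂ ^ α *
        (μ ^ α * q) ^ n := by
  set K := Clam / (q * (μ ^ α - 1))
  set ε := dist b₁ b₂ ^ α
  set P₁ := PiProd A lam n b₁
  set P₂ := PiProd A lam n b₂
  have hμ0 : 0 < μ := one_pos.trans hμ
  have hq0 : 0 < q := (hlam b₁).1.trans_le (hlam b₁).2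
  have hK : 0 ≤ K := div_nonneg hClam (mul_pos hq0 (sub_pos.2 (Real.one_lt_rpow hμ hα))).le
  have hε : 0 ≤ ε := by positivity
  have hQC0 : 0 ≤ QC := (abs_nonneg _).trans (hQC b₁ 0 ⟨le_rfl, zero_le_one⟩)
  have hP : |P₁ - P₂| ≤ K * ε * (μ ^ α * q) ^ n :=
    abs_PiProd_sub_le hμ hα hA hlam hClam hlamHol n b₁ b₂
  have hdist : dist (A^[n] b₁) (A^[n] b₂) ^ α ≤ (μ ^ α) ^ n * ε :=
    dist_iterate_rpow_le hμ0.le hα.le hA n b₁ b₂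
  have hy₁ : P₁ * x ∈ Icc (0:ℝ) 1 := PiProd_mul_mem_Icc hlam hq hx n b₁
  have hy₂ : P₂ * x ∈ Icc (0:ℝ) 1 := PiProd_mul_mem_Icc hlam hq hx n b₂
  have hQdiff : |Q (A^[n] b₁) (P₁ * x) - Q (A^[n] b₂) (P₂ * x)| ≤
      CQ * ((μ ^ α) ^ n * ε) + LQ * (K * ε * (μ ^ α * q) ^ n) := by
    refine (abs_sub_le_of_holder_of_lipschitz hQHol hQLip hy₁ hy₂).trans ?_
    gcongr
    calc |P₁ * x - P₂ * x| = |P₁ - P₂| * x := by rw [← sub_mul, abs_mul, abs_of_nonneg hx.1]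
      _ ≤ |P₁ - P₂| := mul_le_of_le_one_right (abs_nonneg _) hx.2
      _ ≤ _ := hP
  have hldiff : |lam (A^[n] b₁) - lam (A^[n] b₂)| ≤ Clam * ((μ ^ α) ^ n * ε) :=
    (hlamHol _ _).trans (by gcongr)
  refine (abs_mul_div_sub_mul_div_le (PiProd_pos (fun b => (hlam b).1) n b₂).le (hlam _).1
    (hlam _).1 (inv_le_of_one_div_le hD (hDlow _)) (inv_le_of_one_div_le hD (hDlow _))).trans ?_
  calc _ ≤ D * (K * ε * (μ ^ α * q) ^ n * QC + q ^ n * (CQ * ((μ ^ α) ^ n * ε) +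
          LQ * (K * ε * (μ ^ α * q) ^ n)) + D * q ^ n * QC * (Clam * ((μ ^ α) ^ n * ε))) := by
        gcongr
        exacts [hQC _ _ hy₁, PiProd_le_pow hlam n b₂, PiProd_le_pow hlam n b₂, hQC _ _ hy₂]
    _ = D * (K * QC + CQ + q ^ n * (LQ * K) + D * QC * Clam) * ε * (μ ^ α * q) ^ n := by
        rw [mul_pow]
        ring
    _ ≤ D * (K * QC + CQ + LQ * K + D * QC * Clam) * ε * (μ ^ α * q) ^ n := by
        gcongr D * (_ + _ + ?_ + _) * _ * _
        exact mul_le_of_le_one_left (by positivity) (pow_le_one₀ hq0.le hq)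
    _ = D * ((QC + LQ) * K + CQ + D * QC * Clam) * ε * (μ ^ α * q) ^ n := by ring

end

theorem statement5_general {d : ℕ} (A : Torus d → Torus d)
    (μ : ℝ) (hμ : 1 < μ)
    (hA : ∀ b₁ b₂ : Torus d, dist (A b₁) (A b₂) ≤ μ * dist b₁ b₂)
    (lam : Torus d → ℝ)
    (q D : ℝ) (hq : q < 1) (hD : 1 ≤ D)
    (hlam : ∀ b, 0 < lam b ∧ lam b ≤ q) (hDlow : ∀ b, 1 / D ≤ lam b)
    (α Clam : ℝ) (hα : 0 < α) (hθ : μ ^ α * q < 1)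
    (hlamHol : ∀ b₁ b₂ : Torus d, |lam b₁ - lam b₂| ≤ Clam * dist b₁ b₂ ^ α)
    (Q : Torus d → ℝ → ℝ) (QC CQ LQ : ℝ)
    (hQC : ∀ b : Torus d, ∀ x ∈ Icc (0:ℝ) 1, |Q b x| ≤ QC)
    (hQHol : ∀ b₁ b₂ : Torus d, ∀ x ∈ Icc (0:ℝ) 1, |Q b₁ x - Q b₂ x| ≤ CQ * dist b₁ b₂ ^ α)
    (hQLip : ∀ b : Torus d, ∀ x ∈ Icc (0:ℝ) 1, ∀ y ∈ Icc (0:ℝ) 1,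
      |Q b x - Q b y| ≤ LQ * |x - y|) :
    ∃ Ch : ℝ, ∀ b₁ b₂ : Torus d, ∀ x ∈ Icc (0:ℝ) 1,
      |homSol A lam Q b₁ x - homSol A lam Q b₂ x| ≤ Ch * dist b₁ b₂ ^ α := by
  have hD0 : 0 < D := one_pos.trans_le hD
  have hθ0 : 0 ≤ μ ^ α * q :=
    mul_nonneg (Real.rpow_nonneg (by linarith) α) ((hlam 0).1.le.trans (hlam 0).2)
  have hLQ : 0 ≤ LQ := by
    simpa using (abs_nonneg _).trans (hQLip 0 0 ⟨le_rfl, zero_le_one⟩ 1 ⟨zero_le_one, le_rfl⟩)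
  refine ⟨D * ((QC + LQ) * (Clam / (q * (μ ^ α - 1))) + CQ + D * QC * Clam) / (1 - μ ^ α * q),
    fun b₁ b₂ x hx => ?_⟩
  rcases eq_or_ne b₁ b₂ with rfl | hne
  · simp [Real.zero_rpow hα.ne']
  -- a nonzero `dist b₁ b₂ ^ α` forces the Hölder constants to be nonnegative
  have hε : 0 < dist b₁ b₂ ^ α := Real.rpow_pos_of_pos (dist_pos.2 hne) α
  have hClam : 0 ≤ Clam := nonneg_of_mul_nonneg_left ((abs_nonneg _).trans (hlamHol b₁ b₂)) hε
  have hCQ : 0 ≤ CQ :=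
    nonneg_of_mul_nonneg_left ((abs_nonneg _).trans (hQHol b₁ b₂ 0 ⟨le_rfl, zero_le_one⟩)) hε
  rw [homSol_eq_neg_tsum, homSol_eq_neg_tsum, neg_sub_neg, abs_sub_comm, div_mul_eq_mul_div]
  exact abs_tsum_sub_tsum_le_of_geometric (summable_homSolTerm hD0 hlam hq hDlow hQC hx b₁)
    (summable_homSolTerm hD0 hlam hq hDlow hQC hx b₂) hθ0 hθ
    (abs_homSolTerm_sub_le hμ hα hA hD0 hlam hq.le hDlow hClam hlamHol hQC hCQ hQHol hLQ hQLip hx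
      b₁ b₂)

/-- Hölder continuity in the base of the solution `h = LQ` of the normalized
homological equation: if `λ` is `α`-Hölder, `Q` is `α`-Hölder in `b` and Lipschitz in `x`,
and `θ = μ^α q < 1`, then there is a constant `C_h` with
`|h(b₁,x) − h(b₂,x)| ≤ C_h dist(b₁,b₂)^α` for all `b₁, b₂ ∈ 𝕋^d`, `x ∈ [0,1]`. -/
theorem statement5 {d : ℕ} (A : Torus d → Torus d)
    (μ : ℝ) (hμ : 1 < μ)
    (hA : ∀ b₁ b₂ : Torus d, dist (A b₁) (A b₂) ≤ μ * dist b₁ b₂)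
    (lam : Torus d → ℝ) (hlamc : Continuous lam)
    (q D : ℝ) (hq : q < 1) (hD : 1 ≤ D)
    (hlam : ∀ b, 0 < lam b ∧ lam b ≤ q) (hDlow : ∀ b, 1 / D ≤ lam b)
    (α Clam : ℝ) (hα : 0 < α) (hθ : μ ^ α * q < 1)
    (hlamHol : ∀ b₁ b₂ : Torus d, |lam b₁ - lam b₂| ≤ Clam * dist b₁ b₂ ^ α)
    (Q : Torus d → ℝ → ℝ) (QC CQ LQ : ℝ)
    (hQC : ∀ b : Torus d, ∀ x ∈ Icc (0:ℝ) 1, |Q b x| ≤ QC)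
    (hQHol : ∀ b₁ b₂ : Torus d, ∀ x ∈ Icc (0:ℝ) 1, |Q b₁ x - Q b₂ x| ≤ CQ * dist b₁ b₂ ^ α)
    (hQLip : ∀ b : Torus d, ∀ x ∈ Icc (0:ℝ) 1, ∀ y ∈ Icc (0:ℝ) 1,
      |Q b x - Q b y| ≤ LQ * |x - y|) :
    ∃ Ch : ℝ, ∀ b₁ b₂ : Torus d, ∀ x ∈ Icc (0:ℝ) 1,
      |homSol A lam Q b₁ x - homSol A lam Q b₂ x| ≤ Ch * dist b₁ b₂ ^ α :=
  statement5_general A μ hμ hA lam q D hq hD hlam hDlow α Clam hα hθ hlamHol Q QC CQ LQ hQC hQHol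
    hQLip
end
end

section
/- Let Q : 𝕋^d × [0,1] → ℝ be bounded and Lipschitz in x uniformly in b, and fix A > 0. Define the normalized shift operator Φh(b,x) = (1 + x h(b,x))² Q(b, x + x² h(b,x)). Then Φ is strongly contracting in the supremum norm on 𝕋^d × [0,ε]: there is a function ν(ε) with ν(ε) → 0 as ε → 0 (explicitly one may take ν(ε) = ε² Lip_x Q + 2ε||Q||_C + 2ε² A Lip_x Q + 2ε² A ||Q||_C + ε⁴ A² Lip_x Q) such that for all continuous h, g with ||h||_{C,ε} ≤ A and ||g||_{C,ε} ≤ A one has ||Φh − Φg||_{C,ε} ≤ ν(ε) ||h − g||_{C,ε}. Consequently, if L is a linear operator with ||L h||_{C,ε} ≤ K ||h||_{C,ε} for a fixed constant K, then for ε small enough the composition L∘Φ is a contraction in the norm ||·||_{C,ε} on { h : ||h||_{C,ε} ≤ A }. -/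
open Set Function

noncomputable section

/-- The normalized shift operator `Φh(b,x) = (1 + x h(b,x))² Q(b, x + x² h(b,x))`. -/
def shiftOp {d : ℕ} (Q h : Torus d → ℝ → ℝ) : Torus d → ℝ → ℝ :=
  fun b x => (1 + x * h b x) ^ 2 * Q b (x + x ^ 2 * h b x)

set_option maxHeartbeats 1600000 in
/-- the normalized shift operator `Φ` is strongly contracting in the `C`-norm on
`𝕋^d × [0,ε]` with explicit contraction factor
`ν(ε) = ε² Lip_x Q + 2ε‖Q‖_C + 2ε² A Lip_x Q + 2ε² A ‖Q‖_C + ε⁴ A² Lip_x Q → 0` as `ε → 0`;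
consequently, for any linear operator `L` bounded by `K` in the `C`-norm, for `ε` small enough
the composition `L ∘ Φ` is a contraction on `{h : ‖h‖_{C,ε} ≤ A}`.
(The sup-norm `‖h − g‖_{C,ε}` is encoded by quantifying over its upper bounds `Cd`.) -/
theorem statement7 {d : ℕ} (Q : Torus d → ℝ → ℝ) (QC LQ : ℝ)
    (hQC : ∀ (b : Torus d) (x : ℝ), |Q b x| ≤ QC)
    (hQLip : ∀ (b : Torus d) (x y : ℝ), |Q b x - Q b y| ≤ LQ * |x - y|)
    (A : ℝ) (hA : 0 < A) :
    (∀ ε : ℝ, 0 < ε → ε ≤ 1 →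
      ∀ h g : Torus d → ℝ → ℝ,
        (∀ b : Torus d, ∀ x ∈ Icc (0:ℝ) ε, |h b x| ≤ A) →
        (∀ b : Torus d, ∀ x ∈ Icc (0:ℝ) ε, |g b x| ≤ A) →
        ∀ Cd : ℝ, (∀ b : Torus d, ∀ x ∈ Icc (0:ℝ) ε, |h b x - g b x| ≤ Cd) →
        ∀ b : Torus d, ∀ x ∈ Icc (0:ℝ) ε,
          |shiftOp Q h b x - shiftOp Q g b x| ≤
            (ε ^ 2 * LQ + 2 * ε * QC + 2 * ε ^ 2 * A * LQ + 2 * ε ^ 2 * A * QC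
              + ε ^ 4 * A ^ 2 * LQ) * Cd) ∧
    (∀ (L : (Torus d → ℝ → ℝ) → (Torus d → ℝ → ℝ)) (K : ℝ), 0 ≤ K →
      IsLinearMap ℝ L →
      (∀ ε : ℝ, 0 < ε → ∀ u : Torus d → ℝ → ℝ, ∀ Cu : ℝ,
        (∀ b : Torus d, ∀ x ∈ Icc (0:ℝ) ε, |u b x| ≤ Cu) →
        ∀ b : Torus d, ∀ x ∈ Icc (0:ℝ) ε, |L u b x| ≤ K * Cu) →
      ∃ ε₀ > (0:ℝ), ∀ ε : ℝ, 0 < ε → ε ≤ ε₀ →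
        ∃ ν : ℝ, 0 ≤ ν ∧ ν < 1 ∧
          ∀ h g : Torus d → ℝ → ℝ,
            (∀ b : Torus d, ∀ x ∈ Icc (0:ℝ) ε, |h b x| ≤ A) →
            (∀ b : Torus d, ∀ x ∈ Icc (0:ℝ) ε, |g b x| ≤ A) →
            ∀ Cd : ℝ, 0 ≤ Cd →
              (∀ b : Torus d, ∀ x ∈ Icc (0:ℝ) ε, |h b x - g b x| ≤ Cd) →
              ∀ b : Torus d, ∀ x ∈ Icc (0:ℝ) ε,
                |L (shiftOp Q h) b x - L (shiftOp Q g) b x| ≤ ν * Cd) := by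
  have hb0 : ∃ b : Torus d, True := ⟨fun _ => 0, trivial⟩
  obtain ⟨b0, -⟩ := hb0
  have hQC0 : 0 ≤ QC := le_trans (abs_nonneg _) (hQC b0 0)
  have hLQ0 : 0 ≤ LQ := by
    have := hQLip b0 0 1
    simpa using le_trans (abs_nonneg _) this
  have key : ∀ ε : ℝ, 0 < ε → ε ≤ 1 →
      ∀ h g : Torus d → ℝ → ℝ,
        (∀ b : Torus d, ∀ x ∈ Icc (0:ℝ) ε, |h b x| ≤ A) →
        (∀ b : Torus d, ∀ x ∈ Icc (0:ℝ) ε, |g b x| ≤ A) →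
        ∀ Cd : ℝ, (∀ b : Torus d, ∀ x ∈ Icc (0:ℝ) ε, |h b x - g b x| ≤ Cd) →
        ∀ b : Torus d, ∀ x ∈ Icc (0:ℝ) ε,
          |shiftOp Q h b x - shiftOp Q g b x| ≤
            (ε ^ 2 * LQ + 2 * ε * QC + 2 * ε ^ 2 * A * LQ + 2 * ε ^ 2 * A * QC
              + ε ^ 4 * A ^ 2 * LQ) * Cd := by
    intro ε hε hε1 h g hh hg Cd hCd b x hx
    obtain ⟨hx0, hxε⟩ := hx
    have hεpos : 0 ≤ ε := hε.le
    have hH := hh b x ⟨hx0, hxε⟩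
    have hG := hg b x ⟨hx0, hxε⟩
    have hD := hCd b x ⟨hx0, hxε⟩
    have hCd0 : 0 ≤ Cd := le_trans (abs_nonneg _) hD
    set H := h b x with hHdef
    set G := g b x with hGdef
    have hxabs : |x| = x := abs_of_nonneg hx0
    have hxA : |x * H| ≤ ε * A := by
      rw [abs_mul, hxabs]
      exact mul_le_mul hxε hH (abs_nonneg _) hεpos
    have h1 : |1 + x * H| ≤ 1 + ε * A := by
      calc |1 + x * H| ≤ |(1:ℝ)| + |x * H| := abs_add_le _ _
        _ ≤ 1 + ε * A := by rw [abs_one]; linarith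
    have hsq : (1 + x * H) ^ 2 ≤ (1 + ε * A) ^ 2 := by
      calc (1 + x * H) ^ 2 = |1 + x * H| ^ 2 := (sq_abs _).symm
        _ ≤ (1 + ε * A) ^ 2 := by
            apply pow_le_pow_left₀ (abs_nonneg _) h1
    have hxHG : |x * (H - G)| ≤ ε * Cd := by
      rw [abs_mul, hxabs]
      exact mul_le_mul hxε hD (abs_nonneg _) hεpos
    have hx2 : x ^ 2 ≤ ε ^ 2 := by nlinarith
    have hQdiff : |Q b (x + x ^ 2 * H) - Q b (x + x ^ 2 * G)| ≤ LQ * (ε ^ 2 * Cd) := by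
      have := hQLip b (x + x ^ 2 * H) (x + x ^ 2 * G)
      have heq : (x + x ^ 2 * H) - (x + x ^ 2 * G) = x ^ 2 * (H - G) := by ring
      rw [heq, abs_mul, abs_of_nonneg (sq_nonneg x)] at this
      calc |Q b (x + x ^ 2 * H) - Q b (x + x ^ 2 * G)| ≤ LQ * (x ^ 2 * |H - G|) := this
        _ ≤ LQ * (ε ^ 2 * Cd) := by
            apply mul_le_mul_of_nonneg_left _ hLQ0
            exact mul_le_mul hx2 hD (abs_nonneg _) (sq_nonneg ε)
    have hsum : |2 + x * (H + G)| ≤ 2 + 2 * ε * A := by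
      calc |2 + x * (H + G)| ≤ |(2:ℝ)| + |x * (H + G)| := abs_add_le _ _
        _ ≤ 2 + 2 * ε * A := by
            rw [abs_mul, hxabs]
            have : |H + G| ≤ 2 * A := by
              calc |H + G| ≤ |H| + |G| := abs_add_le _ _
                _ ≤ 2 * A := by linarith
            have := mul_le_mul hxε this (abs_nonneg _) hεpos
            simp only [abs_two]
            nlinarith
    have decomp : shiftOp Q h b x - shiftOp Q g b x
        = (1 + x * H) ^ 2 * (Q b (x + x ^ 2 * H) - Q b (x + x ^ 2 * G))
          + ((2 + x * (H + G)) * (x * (H - G))) * Q b (x + x ^ 2 * G) := by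
      simp only [shiftOp, ← hHdef, ← hGdef]; ring
    have hQG := hQC b (x + x ^ 2 * G)
    calc |shiftOp Q h b x - shiftOp Q g b x|
        ≤ |(1 + x * H) ^ 2 * (Q b (x + x ^ 2 * H) - Q b (x + x ^ 2 * G))|
          + |((2 + x * (H + G)) * (x * (H - G))) * Q b (x + x ^ 2 * G)| := by
          rw [decomp]; exact abs_add_le _ _
      _ = (1 + x * H) ^ 2 * |Q b (x + x ^ 2 * H) - Q b (x + x ^ 2 * G)|
          + |2 + x * (H + G)| * |x * (H - G)| * |Q b (x + x ^ 2 * G)| := by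
          rw [abs_mul, abs_mul, abs_mul, abs_of_nonneg (sq_nonneg (1 + x * H))]
      _ ≤ (1 + ε * A) ^ 2 * (LQ * (ε ^ 2 * Cd)) + (2 + 2 * ε * A) * (ε * Cd) * QC := by
          have t1 : (1 + x * H) ^ 2 * |Q b (x + x ^ 2 * H) - Q b (x + x ^ 2 * G)|
              ≤ (1 + ε * A) ^ 2 * (LQ * (ε ^ 2 * Cd)) :=
            mul_le_mul hsq hQdiff (abs_nonneg _) (sq_nonneg _)
          have t2 : |2 + x * (H + G)| * |x * (H - G)| * |Q b (x + x ^ 2 * G)|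
              ≤ (2 + 2 * ε * A) * (ε * Cd) * QC := by
            apply mul_le_mul _ hQG (abs_nonneg _)
            · nlinarith [mul_nonneg hεpos hCd0, mul_nonneg hεpos hA.le,
                mul_nonneg (mul_nonneg hεpos hA.le) (mul_nonneg hεpos hCd0)]
            · exact mul_le_mul hsum hxHG (abs_nonneg _) (by nlinarith [mul_nonneg hεpos hA.le])
          linarith
      _ ≤ (ε ^ 2 * LQ + 2 * ε * QC + 2 * ε ^ 2 * A * LQ + 2 * ε ^ 2 * A * QC
            + ε ^ 4 * A ^ 2 * LQ) * Cd := by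
          have hnn : 0 ≤ 2 * ε ^ 2 * A * LQ * Cd * (1 - ε) :=
            mul_nonneg (mul_nonneg (mul_nonneg (mul_nonneg
              (by positivity : (0:ℝ) ≤ 2 * ε ^ 2) hA.le) hLQ0) hCd0) (sub_nonneg.2 hε1)
          have hid : (ε ^ 2 * LQ + 2 * ε * QC + 2 * ε ^ 2 * A * LQ + 2 * ε ^ 2 * A * QC
              + ε ^ 4 * A ^ 2 * LQ) * Cd
              - ((1 + ε * A) ^ 2 * (LQ * (ε ^ 2 * Cd)) + (2 + 2 * ε * A) * (ε * Cd) * QC)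
              = 2 * ε ^ 2 * A * LQ * Cd * (1 - ε) := by ring
          linarith
  refine ⟨key, ?_⟩
  intro L K hK hLlin hLbd
  set M : ℝ := LQ + 2 * QC + 2 * A * LQ + 2 * A * QC + A ^ 2 * LQ with hMdef
  have hM0 : 0 ≤ M := by positivity
  have hden : (0:ℝ) < 2 * (K * M + 1) := by positivity
  refine ⟨min 1 (1 / (2 * (K * M + 1))), lt_min one_pos (by positivity), ?_⟩
  intro ε hε hεle
  have hε1 : ε ≤ 1 := hεle.trans (min_le_left _ _)
  have hεd : ε * (2 * (K * M + 1)) ≤ 1 := by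
    have := hεle.trans (min_le_right _ _)
    rwa [le_div_iff₀ hden] at this
  set νe : ℝ := ε ^ 2 * LQ + 2 * ε * QC + 2 * ε ^ 2 * A * LQ + 2 * ε ^ 2 * A * QC
      + ε ^ 4 * A ^ 2 * LQ with hνedef
  have hνe0 : 0 ≤ νe := by positivity
  have hε2 : ε ^ 2 ≤ ε := by nlinarith
  have hε4 : ε ^ 4 ≤ ε := by nlinarith
  have hνeM : νe ≤ ε * M := by
    rw [hνedef, hMdef]
    have n1 : 0 ≤ (ε - ε ^ 2) * LQ := mul_nonneg (sub_nonneg.2 hε2) hLQ0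
    have n2 : 0 ≤ A * ((ε - ε ^ 2) * LQ) := mul_nonneg hA.le n1
    have n3 : 0 ≤ A * ((ε - ε ^ 2) * QC) :=
      mul_nonneg hA.le (mul_nonneg (sub_nonneg.2 hε2) hQC0)
    have n4 : 0 ≤ A ^ 2 * ((ε - ε ^ 4) * LQ) :=
      mul_nonneg (sq_nonneg A) (mul_nonneg (sub_nonneg.2 hε4) hLQ0)
    nlinarith [n1, n2, n3, n4]
  refine ⟨K * νe, mul_nonneg hK hνe0, ?_, ?_⟩
  · have h1 : K * νe ≤ K * (ε * M) := mul_le_mul_of_nonneg_left hνeM hK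
    have h2 : K * (ε * M) = (ε * (2 * (K * M + 1)) - 2 * ε) / 2 := by ring
    linarith
  · intro h g hh hg Cd hCd0 hCd b x hx
    have hu : ∀ b : Torus d, ∀ x ∈ Icc (0:ℝ) ε,
        |(shiftOp Q h - shiftOp Q g) b x| ≤ νe * Cd := by
      intro b x hx
      simp only [Pi.sub_apply]
      rw [hνedef]
      exact key ε hε hε1 h g hh hg Cd hCd b x hx
    have hsub : L (shiftOp Q h) - L (shiftOp Q g) = L (shiftOp Q h - shiftOp Q g) :=
      ((hLlin.mk' L).map_sub _ _).symm
    have hLx := hLbd ε hε (shiftOp Q h - shiftOp Q g) (νe * Cd) hu b x hx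
    have heq : L (shiftOp Q h) b x - L (shiftOp Q g) b x
        = L (shiftOp Q h - shiftOp Q g) b x := by
      rw [← hsub]; simp
    rw [heq]
    calc |L (shiftOp Q h - shiftOp Q g) b x| ≤ K * (νe * Cd) := hLx
      _ = K * νe * Cd := by ring
end
end

section
/- Let λ : 𝕋^d → ℝ satisfy 1/D ≤ λ_b ≤ q < 1 for all b (D ≥ 1) and be Hölder with exponent α and constant C_λ. Let A : 𝕋^d → 𝕋^d satisfy dist(Ab₁, Ab₂) ≤ μ dist(b₁,b₂) with μ > 1 and μ^α > 1, and set θ = μ^α q and B = θ/((μ^α − 1) q) + 2. Then for every n ≥ 0 the function P_n(b) = Π_n(b)/λ_{A^n b} is Hölder with exponent α and |P_n(b₁) − P_n(b₂)| ≤ D² C_λ B θ^n dist(b₁,b₂)^α for all b₁, b₂ ∈ 𝕋^d. -/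
open Set Function

noncomputable section

/-- `P_n(b) = Π_n(b) / λ_{A^n b}`. -/
def Pfun {d : ℕ} (A : Torus d → Torus d) (lam : Torus d → ℝ) (n : ℕ) (b : Torus d) : ℝ :=
  PiProd A lam n b / lam (A^[n] b)

/-!
Along the two orbits the factors `λ(Aᵏb₁)` and `λ(Aᵏb₂)` differ by at most
`C_λ (μ^α)ᵏ dist(b₁,b₂)^α`, since `Aᵏ` is `μᵏ`-Lipschitz. Telescoping the product one factor at a
time, each such difference gets multiplied by `n − 1` factors at most `q`, and `qⁿ⁻¹ ≤ D qⁿ`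
because `1/D ≤ q`. Dividing by `λ(Aⁿb) ≥ 1/D` costs another `D` (or `D²` for the last factor), and
the geometric sum `∑_{k ≤ n} (μ^α)ᵏ` is at most `(μ^α)ⁿ⁺¹/(μ^α − 1)`.
-/

open Finset

theorem geom_sum_le_pow_div_sub_one {t : ℝ} (ht : 1 < t) (n : ℕ) :
    ∑ k ∈ range n, t ^ k ≤ t ^ n / (t - 1) := by
  rw [geom_sum_eq ht.ne' n]
  gcongr
  linarith

theorem prod_range_le_pow {b : ℕ → ℝ} {q : ℝ} (hb : ∀ k, 0 ≤ b k ∧ b k ≤ q) (n : ℕ) :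
    ∏ k ∈ range n, b k ≤ q ^ n := by
  simpa using prod_le_prod (s := range n) (fun k _ => (hb k).1) (fun k _ => (hb k).2)

-- The factor `q` on the left replaces `q ^ (n - 1)` on the right, which would be junk at `n = 0`.
theorem mul_abs_prod_sub_prod_le {a b : ℕ → ℝ} {q : ℝ} (ha : ∀ k, 0 ≤ a k ∧ a k ≤ q)
    (hb : ∀ k, 0 ≤ b k ∧ b k ≤ q) (n : ℕ) :
    q * |∏ k ∈ range n, a k - ∏ k ∈ range n, b k| ≤ q ^ n * ∑ k ∈ range n, |a k - b k| := by
  induction n with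
  | zero => simp
  | succ n ih =>
    have hq : 0 ≤ q := (ha n).1.trans (ha n).2
    have hprod_b0 : 0 ≤ ∏ k ∈ range n, b k := prod_nonneg fun k _ => (hb k).1
    have := prod_range_le_pow hb n
    rw [prod_range_succ, prod_range_succ, sum_range_succ]
    calc q * |(∏ k ∈ range n, a k) * a n - (∏ k ∈ range n, b k) * b n|
        = q * |(∏ k ∈ range n, a k - ∏ k ∈ range n, b k) * a n
            + (∏ k ∈ range n, b k) * (a n - b n)| := by ring_nf
      _ ≤ q * |∏ k ∈ range n, a k - ∏ k ∈ range n, b k| * a n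
            + q * (∏ k ∈ range n, b k) * |a n - b n| := by
        rw [mul_assoc, mul_assoc, ← mul_add]
        gcongr
        refine (abs_add_le _ _).trans_eq ?_
        rw [abs_mul, abs_mul, abs_of_nonneg (ha n).1, abs_of_nonneg hprod_b0]
      _ ≤ q ^ n * (∑ k ∈ range n, |a k - b k|) * q + q * q ^ n * |a n - b n| := by
        gcongr
        · exact (ha n).1
        · exact (ha n).2
      _ = q ^ (n + 1) * (∑ k ∈ range n, |a k - b k| + |a n - b n|) := by ring

theorem abs_div_sub_div_le {x₁ x₂ y₁ y₂ D : ℝ} (hD : 0 < D) (hy₁ : 1 / D ≤ y₁)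
    (hy₂ : 1 / D ≤ y₂) :
    |x₁ / y₁ - x₂ / y₂| ≤ D * |x₁ - x₂| + D ^ 2 * |x₂| * |y₁ - y₂| := by
  have hy₁0 : 0 < y₁ := (one_div_pos.2 hD).trans_le hy₁
  have hy₂0 : 0 < y₂ := (one_div_pos.2 hD).trans_le hy₂
  have hinv₁ : y₁⁻¹ ≤ D := by rw [inv_le_comm₀ hy₁0 hD, ← one_div]; exact hy₁
  have hinv₂ : y₂⁻¹ ≤ D := by rw [inv_le_comm₀ hy₂0 hD, ← one_div]; exact hy₂
  have hsplit : x₁ / y₁ - x₂ / y₂ = (x₁ - x₂) * y₁⁻¹ + x₂ * (y₂ - y₁) * (y₁⁻¹ * y₂⁻¹) := by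
    field_simp
    ring
  calc |x₁ / y₁ - x₂ / y₂|
      ≤ |x₁ - x₂| * y₁⁻¹ + |x₂| * |y₁ - y₂| * (y₁⁻¹ * y₂⁻¹) := by
        rw [hsplit]
        refine (abs_add_le _ _).trans_eq ?_
        rw [abs_mul, abs_mul, abs_mul, abs_sub_comm y₂, abs_of_pos (inv_pos.2 hy₁0),
          abs_of_pos (mul_pos (inv_pos.2 hy₁0) (inv_pos.2 hy₂0))]
    _ ≤ |x₁ - x₂| * D + |x₂| * |y₁ - y₂| * (D * D) := by gcongr
    _ = D * |x₁ - x₂| + D ^ 2 * |x₂| * |y₁ - y₂| := by ring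

section Orbit

variable {X : Type*} [PseudoMetricSpace X] {A : X → X} {μ : ℝ}

theorem dist_iterate_le (hμ : 0 ≤ μ) (hA : ∀ x y, dist (A x) (A y) ≤ μ * dist x y) (k : ℕ)
    (x y : X) : dist (A^[k] x) (A^[k] y) ≤ μ ^ k * dist x y := by
  induction k with
  | zero => simp
  | succ k ih =>
    rw [iterate_succ_apply', iterate_succ_apply', pow_succ', mul_assoc]
    exact (hA _ _).trans (mul_le_mul_of_nonneg_left ih hμ)

variable {f : X → ℝ} {C α : ℝ}

theorem abs_sub_comp_iterate_le (hμ : 0 ≤ μ) (hC : 0 ≤ C) (hα : 0 ≤ α)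
    (hA : ∀ x y, dist (A x) (A y) ≤ μ * dist x y)
    (hf : ∀ x y, |f x - f y| ≤ C * dist x y ^ α) (k : ℕ) (x y : X) :
    |f (A^[k] x) - f (A^[k] y)| ≤ C * (μ ^ α) ^ k * dist x y ^ α := by
  calc |f (A^[k] x) - f (A^[k] y)| ≤ C * dist (A^[k] x) (A^[k] y) ^ α := hf _ _
    _ ≤ C * (μ ^ k * dist x y) ^ α := by gcongr; exact dist_iterate_le hμ hA k x y
    _ = C * (μ ^ α) ^ k * dist x y ^ α := by
      rw [Real.mul_rpow (by positivity) dist_nonneg, ← Real.rpow_natCast, ← Real.rpow_natCast,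
        ← Real.rpow_mul hμ, ← Real.rpow_mul hμ, mul_comm α, mul_assoc]

theorem abs_prod_iterate_div_sub_le {q D : ℝ} (hD : 0 < D) (hf_mem : ∀ x, 1 / D ≤ f x ∧ f x ≤ q)
    (hμ : 0 ≤ μ) (hC : 0 ≤ C) (hα : 0 ≤ α) (hA : ∀ x y, dist (A x) (A y) ≤ μ * dist x y)
    (hf : ∀ x y, |f x - f y| ≤ C * dist x y ^ α) (n : ℕ) (x y : X) :
    |(∏ k ∈ range n, f (A^[k] x)) / f (A^[n] x) - (∏ k ∈ range n, f (A^[k] y)) / f (A^[n] y)|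
      ≤ D ^ 2 * C * q ^ n * (∑ k ∈ range (n + 1), (μ ^ α) ^ k) * dist x y ^ α := by
  set t := μ ^ α
  set δ := dist x y
  have hf_nonneg : ∀ z, 0 ≤ f z ∧ f z ≤ q := fun z =>
    ⟨(one_div_pos.2 hD).le.trans (hf_mem z).1, (hf_mem z).2⟩
  have hq : 0 ≤ q := (hf_nonneg x).1.trans (hf_nonneg x).2
  have hDq : 1 ≤ D * q := by
    rw [← div_le_iff₀' hD]
    exact (hf_mem x).1.trans (hf_mem x).2
  have horbit := abs_sub_comp_iterate_le hμ hC hα hA hf (x := x) (y := y)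
  set P₁ := ∏ k ∈ range n, f (A^[k] x)
  set P₂ := ∏ k ∈ range n, f (A^[k] y)
  have hprod : q * |P₁ - P₂| ≤ q ^ n * ∑ k ∈ range n, C * t ^ k * δ ^ α :=
    (mul_abs_prod_sub_prod_le (fun k => hf_nonneg (A^[k] x)) (fun k => hf_nonneg (A^[k] y))
      n).trans (mul_le_mul_of_nonneg_left (sum_le_sum fun k _ => horbit k) (by positivity))
  have hP₂ : |P₂| ≤ q ^ n := by
    rw [abs_of_nonneg (prod_nonneg fun k _ => (hf_nonneg _).1)]
    exact prod_range_le_pow (fun k => hf_nonneg (A^[k] y)) n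
  have hDP : D * |P₁ - P₂| ≤ D ^ 2 * (q * |P₁ - P₂|) := by
    have := mul_le_mul_of_nonneg_left hDq (mul_nonneg hD.le (abs_nonneg (P₁ - P₂)))
    linarith
  calc |P₁ / f (A^[n] x) - P₂ / f (A^[n] y)|
      ≤ D * |P₁ - P₂| + D ^ 2 * |P₂| * |f (A^[n] x) - f (A^[n] y)| :=
        abs_div_sub_div_le hD (hf_mem _).1 (hf_mem _).1
    _ ≤ D ^ 2 * (q ^ n * ∑ k ∈ range n, C * t ^ k * δ ^ α)
          + D ^ 2 * q ^ n * (C * t ^ n * δ ^ α) := by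
        refine add_le_add (hDP.trans (by gcongr)) ?_
        gcongr
        exact horbit n
    _ = D ^ 2 * C * q ^ n * (∑ k ∈ range (n + 1), t ^ k) * δ ^ α := by
        rw [sum_range_succ, ← sum_mul, ← mul_sum]; ring

end Orbit

theorem statement12_general {d : ℕ} (A : Torus d → Torus d) (lam : Torus d → ℝ)
    (q D : ℝ) (hD : 1 ≤ D)
    (hlam : ∀ b, 1 / D ≤ lam b ∧ lam b ≤ q)
    (α Clam μ : ℝ) (hμ : 1 < μ) (hμα : 1 < μ ^ α)
    (hA : ∀ b₁ b₂ : Torus d, dist (A b₁) (A b₂) ≤ μ * dist b₁ b₂)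
    (hHol : ∀ b₁ b₂ : Torus d, |lam b₁ - lam b₂| ≤ Clam * dist b₁ b₂ ^ α) :
    ∀ n : ℕ, ∀ b₁ b₂ : Torus d,
      |Pfun A lam n b₁ - Pfun A lam n b₂| ≤
        D ^ 2 * Clam * (μ ^ α * q / ((μ ^ α - 1) * q) + 2) * (μ ^ α * q) ^ n
          * dist b₁ b₂ ^ α := by
  intro n b₁ b₂
  have hD0 : 0 < D := one_pos.trans_le hD
  have hq0 : 0 < q := (one_div_pos.2 hD0).trans_le ((hlam b₁).1.trans (hlam b₁).2)
  -- `μ > 1` and `μ ^ α > 1` force `α > 0`, so that `dist b b ^ α = 0`.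
  have hα : 0 < α := by
    by_contra! h
    exact (Real.rpow_le_one_of_one_le_of_nonpos hμ.le h).not_gt hμα
  rcases eq_or_ne b₁ b₂ with rfl | hne
  · simp [Real.zero_rpow hα.ne']
  have hC : 0 ≤ Clam := nonneg_of_mul_nonneg_left ((abs_nonneg _).trans (hHol b₁ b₂))
    (Real.rpow_pos_of_pos (dist_pos.2 hne) α)
  set t := μ ^ α
  calc |Pfun A lam n b₁ - Pfun A lam n b₂|
      ≤ D ^ 2 * Clam * q ^ n * (∑ k ∈ range (n + 1), t ^ k) * dist b₁ b₂ ^ α :=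
        abs_prod_iterate_div_sub_le hD0 hlam (zero_le_one.trans hμ.le) hC hα.le hA hHol n b₁ b₂
    _ ≤ D ^ 2 * Clam * q ^ n * (t ^ (n + 1) / (t - 1)) * dist b₁ b₂ ^ α := by
        gcongr; exact geom_sum_le_pow_div_sub_one hμα _
    _ = D ^ 2 * Clam * (t * q / ((t - 1) * q)) * (t * q) ^ n * dist b₁ b₂ ^ α := by
        rw [mul_div_mul_right _ _ hq0.ne']; ring
    _ ≤ D ^ 2 * Clam * (t * q / ((t - 1) * q) + 2) * (t * q) ^ n * dist b₁ b₂ ^ α := by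
        gcongr; linarith

/-- Hölder property of `P_n = Π_n/λ_{A^n b}`:
`|P_n(b₁) − P_n(b₂)| ≤ D² C_λ B θ^n dist(b₁,b₂)^α`, where `θ = μ^α q` and
`B = θ/((μ^α − 1) q) + 2`. -/
theorem statement12 {d : ℕ} (A : Torus d → Torus d) (lam : Torus d → ℝ)
    (q D : ℝ) (hq : q < 1) (hD : 1 ≤ D)
    (hlam : ∀ b, 1 / D ≤ lam b ∧ lam b ≤ q)
    (α Clam μ : ℝ) (hμ : 1 < μ) (hμα : 1 < μ ^ α)
    (hA : ∀ b₁ b₂ : Torus d, dist (A b₁) (A b₂) ≤ μ * dist b₁ b₂)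
    (hHol : ∀ b₁ b₂ : Torus d, |lam b₁ - lam b₂| ≤ Clam * dist b₁ b₂ ^ α) :
    ∀ n : ℕ, ∀ b₁ b₂ : Torus d,
      |Pfun A lam n b₁ - Pfun A lam n b₂| ≤
        D ^ 2 * Clam * (μ ^ α * q / ((μ ^ α - 1) * q) + 2) * (μ ^ α * q) ^ n
          * dist b₁ b₂ ^ α :=
  statement12_general A lam q D hD hlam α Clam μ hμ hμα hA hHol
end
end

section
/- Let λ : 𝕋^d → ℝ satisfy 1/D ≤ λ_b ≤ q < 1 for all b (D ≥ 1) and be Hölder with exponent α and constant C_λ, and let A : 𝕋^d → 𝕋^d satisfy dist(Ab₁, Ab₂) ≤ μ dist(b₁,b₂) with μ > 1, μ^α > 1; set θ = μ^α q < 1. Let Q : 𝕋^d × [0,1] → ℝ be Hölder in b with exponent α and constant C_Q (uniformly in x), and Lipschitz in x with constant Lip_x Q (uniformly in b). Then for every k ≥ 1, all b₁, b₂ ∈ 𝕋^d and all x ∈ [0,1], |P_k(b₂)| · |Q(F₀^k(b₁,x)) − Q(F₀^k(b₂,x))| ≤ θ^k D (C_Q + q^{k−1} Lip_x Q · C_λ/(μ^α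 − 1)) dist(b₁,b₂)^α. -/
open Set Function

noncomputable section

/-- the estimate of the term `θ_{2,k}`:
`|P_k(b₂)| · |Q(F₀^k(b₁,x)) − Q(F₀^k(b₂,x))| ≤ θ^k D (C_Q + q^{k−1} Lip_x Q · C_λ/(μ^α − 1)) dist(b₁,b₂)^α`,
where `F₀^k(b,x) = (A^k b, Π_k(b) x)` and `θ = μ^α q`. -/
theorem statement13 {d : ℕ} (A : Torus d → Torus d) (lam : Torus d → ℝ)
    (q D : ℝ) (hq : q < 1) (hD : 1 ≤ D)
    (hlam : ∀ b, 1 / D ≤ lam b ∧ lam b ≤ q)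
    (α Clam μ : ℝ) (hμ : 1 < μ) (hμα : 1 < μ ^ α) (hθ : μ ^ α * q < 1)
    (hA : ∀ b₁ b₂ : Torus d, dist (A b₁) (A b₂) ≤ μ * dist b₁ b₂)
    (hHol : ∀ b₁ b₂ : Torus d, |lam b₁ - lam b₂| ≤ Clam * dist b₁ b₂ ^ α)
    (Q : Torus d → ℝ → ℝ) (CQ LQ : ℝ)
    (hQHol : ∀ b₁ b₂ : Torus d, ∀ x ∈ Icc (0:ℝ) 1, |Q b₁ x - Q b₂ x| ≤ CQ * dist b₁ b₂ ^ α)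
    (hQLip : ∀ b : Torus d, ∀ x ∈ Icc (0:ℝ) 1, ∀ y ∈ Icc (0:ℝ) 1,
      |Q b x - Q b y| ≤ LQ * |x - y|) :
    ∀ k : ℕ, 1 ≤ k → ∀ b₁ b₂ : Torus d, ∀ x ∈ Icc (0:ℝ) 1,
      |Pfun A lam k b₂| *
          |Q (A^[k] b₁) (PiProd A lam k b₁ * x) - Q (A^[k] b₂) (PiProd A lam k b₂ * x)| ≤
        (μ ^ α * q) ^ k * D * (CQ + q ^ (k - 1) * LQ * (Clam / (μ ^ α - 1)))
          * dist b₁ b₂ ^ α := by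
  have hD0 : (0:ℝ) < D := lt_of_lt_of_le one_pos hD
  intro k hk b₁ b₂ x hx
  have hlampos : ∀ b, 0 < lam b := fun b =>
    lt_of_lt_of_le (by positivity) (hlam b).1
  have hq0 : (0:ℝ) < q := lt_of_lt_of_le (hlampos b₁) (hlam b₁).2
  have hμ0 : (0:ℝ) < μ := lt_trans one_pos hμ
  have hα : 0 < α := by
    by_contra h
    push_neg at h
    have := Real.rpow_le_one_of_one_le_of_nonpos hμ.le h
    linarith
  set M := μ ^ α with hMdef
  have hM1 : 1 < M := hμα
  have hM0 : (0:ℝ) < M := lt_trans one_pos hM1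
  -- distance of iterates
  have hiter : ∀ n : ℕ, dist (A^[n] b₁) (A^[n] b₂) ≤ μ ^ n * dist b₁ b₂ := by
    intro n
    induction n with
    | zero => simp
    | succ n ih =>
      rw [Function.iterate_succ_apply', Function.iterate_succ_apply']
      calc dist (A (A^[n] b₁)) (A (A^[n] b₂)) ≤ μ * dist (A^[n] b₁) (A^[n] b₂) := hA _ _
        _ ≤ μ * (μ ^ n * dist b₁ b₂) := by
            exact mul_le_mul_of_nonneg_left ih hμ0.le
        _ = μ ^ (n+1) * dist b₁ b₂ := by ring
  have hpow : ∀ n : ℕ, dist (A^[n] b₁) (A^[n] b₂) ^ α ≤ M ^ n * dist b₁ b₂ ^ α := by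
    intro n
    calc dist (A^[n] b₁) (A^[n] b₂) ^ α ≤ (μ ^ n * dist b₁ b₂) ^ α :=
          Real.rpow_le_rpow dist_nonneg (hiter n) hα.le
      _ = (μ ^ n) ^ α * dist b₁ b₂ ^ α := Real.mul_rpow (pow_nonneg hμ0.le n) dist_nonneg
      _ = M ^ n * dist b₁ b₂ ^ α := by
          rw [hMdef, ← Real.rpow_natCast μ n, ← Real.rpow_mul hμ0.le,
            ← Real.rpow_natCast (μ ^ α) n, ← Real.rpow_mul hμ0.le, mul_comm (n:ℝ) α]
  have hPiPos : ∀ n b, 0 < PiProd A lam n b := fun n b =>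
    Finset.prod_pos fun i _ => hlampos _
  have hPile : ∀ n b, PiProd A lam n b ≤ q ^ n := by
    intro n b
    calc PiProd A lam n b ≤ ∏ _i ∈ Finset.range n, q :=
          Finset.prod_le_prod (fun i _ => (hlampos _).le) (fun i _ => (hlam _).2)
      _ = q ^ n := by simp
  have hqk1 : ∀ n : ℕ, q ^ n ≤ 1 := fun n => pow_le_one₀ hq0.le hq.le
  have hmem : ∀ b, PiProd A lam k b * x ∈ Icc (0:ℝ) 1 := by
    intro b
    constructor
    · exact mul_nonneg (hPiPos k b).le hx.1
    · calc PiProd A lam k b * x ≤ 1 * 1 :=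
            mul_le_mul ((hPile k b).trans (hqk1 k)) hx.2 hx.1 zero_le_one
        _ = 1 := by ring
  rcases eq_or_lt_of_le (dist_nonneg : (0:ℝ) ≤ dist b₁ b₂) with hd | hd
  · have hb : b₁ = b₂ := dist_eq_zero.mp hd.symm
    subst hb
    simp [Real.zero_rpow hα.ne']
  have hdα : 0 < dist b₁ b₂ ^ α := Real.rpow_pos_of_pos hd α
  have hClam : 0 ≤ Clam := by
    by_contra h
    push_neg at h
    nlinarith [(abs_nonneg (lam b₁ - lam b₂)).trans (hHol b₁ b₂),
      mul_pos (neg_pos.mpr h) hdα]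
  have hCQ : 0 ≤ CQ := by
    by_contra h
    push_neg at h
    nlinarith [(abs_nonneg (Q b₁ 0 - Q b₂ 0)).trans
      (hQHol b₁ b₂ 0 ⟨le_refl 0, zero_le_one⟩), mul_pos (neg_pos.mpr h) hdα]
  have hLQ : 0 ≤ LQ := by
    have h := (abs_nonneg (Q b₁ 0 - Q b₁ 1)).trans
      (hQLip b₁ 0 ⟨le_refl 0, zero_le_one⟩ 1 ⟨zero_le_one, le_refl 1⟩)
    simpa using h
  -- key product-difference estimate
  have keyS : ∀ n : ℕ, q * |PiProd A lam n b₁ - PiProd A lam n b₂| ≤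
      Clam * dist b₁ b₂ ^ α * q ^ n * ∑ j ∈ Finset.range n, M ^ j := by
    intro n
    induction n with
    | zero => simp [PiProd]
    | succ n ih =>
      have hsplit : PiProd A lam (n+1) b₁ - PiProd A lam (n+1) b₂ =
          PiProd A lam n b₁ * (lam (A^[n] b₁) - lam (A^[n] b₂)) +
            (PiProd A lam n b₁ - PiProd A lam n b₂) * lam (A^[n] b₂) := by
        simp only [PiProd, Finset.prod_range_succ]
        ring
      have habs : |PiProd A lam (n+1) b₁ - PiProd A lam (n+1) b₂| ≤
          q ^ n * (Clam * (M ^ n * dist b₁ b₂ ^ α)) +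
            |PiProd A lam n b₁ - PiProd A lam n b₂| * q := by
        rw [hsplit]
        refine (abs_add_le _ _).trans ?_
        rw [abs_mul, abs_mul]
        have e1 : |PiProd A lam n b₁| ≤ q ^ n := by
          rw [abs_of_pos (hPiPos n b₁)]; exact hPile n b₁
        have e2 : |lam (A^[n] b₁) - lam (A^[n] b₂)| ≤ Clam * (M ^ n * dist b₁ b₂ ^ α) :=
          (hHol _ _).trans (mul_le_mul_of_nonneg_left (hpow n) hClam)
        have e3 : |lam (A^[n] b₂)| ≤ q := by
          rw [abs_of_pos (hlampos _)]; exact (hlam _).2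
        have t1 := mul_le_mul e1 e2 (abs_nonneg _) (pow_nonneg hq0.le n)
        have t2 := mul_le_mul_of_nonneg_left e3
          (abs_nonneg (PiProd A lam n b₁ - PiProd A lam n b₂))
        linarith
      calc q * |PiProd A lam (n+1) b₁ - PiProd A lam (n+1) b₂|
          ≤ q * (q ^ n * (Clam * (M ^ n * dist b₁ b₂ ^ α)) +
              |PiProd A lam n b₁ - PiProd A lam n b₂| * q) :=
            mul_le_mul_of_nonneg_left habs hq0.le
        _ = Clam * dist b₁ b₂ ^ α * q ^ (n+1) * M ^ n +
              q * (q * |PiProd A lam n b₁ - PiProd A lam n b₂|) := by ring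
        _ ≤ Clam * dist b₁ b₂ ^ α * q ^ (n+1) * M ^ n +
              q * (Clam * dist b₁ b₂ ^ α * q ^ n * ∑ j ∈ Finset.range n, M ^ j) := by
            linarith [mul_le_mul_of_nonneg_left ih hq0.le]
        _ = Clam * dist b₁ b₂ ^ α * q ^ (n+1) *
              (∑ j ∈ Finset.range n, M ^ j + M ^ n) := by ring
        _ = Clam * dist b₁ b₂ ^ α * q ^ (n+1) * ∑ j ∈ Finset.range (n+1), M ^ j := by
            rw [Finset.sum_range_succ]
  obtain ⟨m, rfl⟩ : ∃ m, k = m + 1 := ⟨k - 1, (Nat.succ_pred_eq_of_pos hk).symm⟩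
  have hdiff : |PiProd A lam (m+1) b₁ - PiProd A lam (m+1) b₂| ≤
      Clam * dist b₁ b₂ ^ α * q ^ m * ∑ j ∈ Finset.range (m+1), M ^ j := by
    have h := keyS (m+1)
    have h2 : Clam * dist b₁ b₂ ^ α * q ^ (m+1) * ∑ j ∈ Finset.range (m+1), M ^ j
        = q * (Clam * dist b₁ b₂ ^ α * q ^ m * ∑ j ∈ Finset.range (m+1), M ^ j) := by
      ring
    rw [h2] at h
    exact le_of_mul_le_mul_left h hq0
  have hS : ∑ j ∈ Finset.range (m+1), M ^ j ≤ M ^ (m+1) / (M - 1) := by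
    rw [geom_sum_eq hM1.ne']
    have hM1' : (0:ℝ) < M - 1 := by linarith
    gcongr
    linarith
  have hP : |Pfun A lam (m+1) b₂| ≤ q ^ (m+1) * D := by
    rw [Pfun, abs_div, abs_of_pos (hPiPos _ _), abs_of_pos (hlampos _),
      div_le_iff₀ (hlampos _)]
    have h1 : (1:ℝ) ≤ D * lam (A^[m+1] b₂) := by
      calc (1:ℝ) = D * (1/D) := by field_simp
        _ ≤ D * lam (A^[m+1] b₂) :=
            mul_le_mul_of_nonneg_left (hlam _).1 hD0.le
    nlinarith [hPile (m+1) b₂,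
      mul_nonneg (pow_nonneg hq0.le (m+1)) (by linarith : (0:ℝ) ≤ D * lam (A^[m+1] b₂) - 1)]
  have hQ1 : |Q (A^[m+1] b₁) (PiProd A lam (m+1) b₁ * x) -
        Q (A^[m+1] b₂) (PiProd A lam (m+1) b₁ * x)|
      ≤ CQ * (M ^ (m+1) * dist b₁ b₂ ^ α) :=
    (hQHol _ _ _ (hmem b₁)).trans (mul_le_mul_of_nonneg_left (hpow (m+1)) hCQ)
  have hQ2 : |Q (A^[m+1] b₂) (PiProd A lam (m+1) b₁ * x) -
        Q (A^[m+1] b₂) (PiProd A lam (m+1) b₂ * x)|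
      ≤ LQ * (Clam * dist b₁ b₂ ^ α * q ^ m * ∑ j ∈ Finset.range (m+1), M ^ j) := by
    refine (hQLip _ _ (hmem b₁) _ (hmem b₂)).trans ?_
    have heq : PiProd A lam (m+1) b₁ * x - PiProd A lam (m+1) b₂ * x
        = (PiProd A lam (m+1) b₁ - PiProd A lam (m+1) b₂) * x := by ring
    rw [heq, abs_mul]
    have hxle : |x| ≤ 1 := abs_le.mpr ⟨by linarith [hx.1], hx.2⟩
    calc LQ * (|PiProd A lam (m+1) b₁ - PiProd A lam (m+1) b₂| * |x|)
        ≤ LQ * (|PiProd A lam (m+1) b₁ - PiProd A lam (m+1) b₂| * 1) :=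
          mul_le_mul_of_nonneg_left
            (mul_le_mul_of_nonneg_left hxle (abs_nonneg _)) hLQ
      _ = LQ * |PiProd A lam (m+1) b₁ - PiProd A lam (m+1) b₂| := by ring
      _ ≤ LQ * (Clam * dist b₁ b₂ ^ α * q ^ m * ∑ j ∈ Finset.range (m+1), M ^ j) :=
          mul_le_mul_of_nonneg_left hdiff hLQ
  have htri : |Q (A^[m+1] b₁) (PiProd A lam (m+1) b₁ * x) -
        Q (A^[m+1] b₂) (PiProd A lam (m+1) b₂ * x)|
      ≤ CQ * (M ^ (m+1) * dist b₁ b₂ ^ α) +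
        LQ * (Clam * dist b₁ b₂ ^ α * q ^ m * ∑ j ∈ Finset.range (m+1), M ^ j) :=
    (abs_sub_le _ _ _).trans (add_le_add hQ1 hQ2)
  have hc : 0 ≤ LQ * Clam * dist b₁ b₂ ^ α * q ^ m :=
    mul_nonneg (mul_nonneg (mul_nonneg hLQ hClam) hdα.le) (pow_nonneg hq0.le m)
  have hfin : CQ * (M ^ (m+1) * dist b₁ b₂ ^ α) +
        LQ * (Clam * dist b₁ b₂ ^ α * q ^ m * ∑ j ∈ Finset.range (m+1), M ^ j)
      ≤ M ^ (m+1) * (CQ + q ^ m * LQ * (Clam / (M - 1))) * dist b₁ b₂ ^ α := by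
    have h2 := mul_le_mul_of_nonneg_left hS hc
    calc CQ * (M ^ (m+1) * dist b₁ b₂ ^ α) +
          LQ * (Clam * dist b₁ b₂ ^ α * q ^ m * ∑ j ∈ Finset.range (m+1), M ^ j)
        = CQ * (M ^ (m+1) * dist b₁ b₂ ^ α) +
          (LQ * Clam * dist b₁ b₂ ^ α * q ^ m) * ∑ j ∈ Finset.range (m+1), M ^ j := by ring
      _ ≤ CQ * (M ^ (m+1) * dist b₁ b₂ ^ α) +
          (LQ * Clam * dist b₁ b₂ ^ α * q ^ m) * (M ^ (m+1) / (M - 1)) := by linarith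
      _ = M ^ (m+1) * (CQ + q ^ m * LQ * (Clam / (M - 1))) * dist b₁ b₂ ^ α := by ring
  simp only [Nat.add_sub_cancel]
  calc |Pfun A lam (m+1) b₂| *
        |Q (A^[m+1] b₁) (PiProd A lam (m+1) b₁ * x) -
          Q (A^[m+1] b₂) (PiProd A lam (m+1) b₂ * x)|
      ≤ (q ^ (m+1) * D) *
        (CQ * (M ^ (m+1) * dist b₁ b₂ ^ α) +
          LQ * (Clam * dist b₁ b₂ ^ α * q ^ m * ∑ j ∈ Finset.range (m+1), M ^ j)) :=
        mul_le_mul hP htri (abs_nonneg _)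
          (mul_nonneg (pow_nonneg hq0.le _) hD0.le)
    _ ≤ (q ^ (m+1) * D) *
        (M ^ (m+1) * (CQ + q ^ m * LQ * (Clam / (M - 1))) * dist b₁ b₂ ^ α) :=
        mul_le_mul_of_nonneg_left hfin (mul_nonneg (pow_nonneg hq0.le _) hD0.le)
    _ = (M * q) ^ (m+1) * D * (CQ + q ^ m * LQ * (Clam / (M - 1))) * dist b₁ b₂ ^ α := by
        rw [mul_pow]; ring
end
end

section
/- Let Q : 𝕋^d × [0,1] → ℝ be bounded with sup norm ||Q||_C, Lipschitz in x with constant Lip_x Q, and Hölder in b with exponent α and constant C_Q, and define Φh(b,x) = (1 + x h(b,x))² Q(b, x + x² h(b,x)). Fix A > 0 and A_α > 0. Then for every continuous h on 𝕋^d × [0,ε] with ||h||_{C,ε} ≤ A and ||h||_{[α],ε} ≤ A_α, Φh is also Hölder in b with exponent α, and ||Φh||_{[α],ε} ≤ T̃₄⁰(ε) A_α + T̃₂(ε), where T̃₄⁰(ε) = Lip_x Q ε² + 2ε³ A Lip_x Q + 2ε ||Q||_C + ε⁴ A² Lip_x Q + 2||Q||_C A ε² and T̃₂(ε) = C_Q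 + 2εA C_Q + ε²A² C_Q; in particular T̃₄⁰ has degree 4 with T̃₄⁰(0) = 0 and T̃₂ has degree 2. -/
open Set Function

noncomputable section

/-- Product bound helper. -/
lemma abs_mul_le' {a b A' B' : ℝ} (ha : |a| ≤ A') (hb : |b| ≤ B') :
    |a * b| ≤ A' * B' := by
  rw [abs_mul]
  exact mul_le_mul ha hb (abs_nonneg b) ((abs_nonneg a).trans ha)

/-- Hölder estimate for the normalized shift operator:
if `‖h‖_{C,ε} ≤ A` and `‖h‖_{[α],ε} ≤ A_α` then `Φh` is Hölder in `b` with exponent `α` and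
`‖Φh‖_{[α],ε} ≤ T̃₄⁰(ε) A_α + T̃₂(ε)`, where
`T̃₄⁰(ε) = Lip_x Q ε² + 2ε³ A Lip_x Q + 2ε ‖Q‖_C + ε⁴ A² Lip_x Q + 2‖Q‖_C A ε²` and
`T̃₂(ε) = C_Q + 2εA C_Q + ε²A² C_Q`. -/

theorem statement16 {d : ℕ} (Q : Torus d → ℝ → ℝ) (QC LQ CQ α : ℝ)
    (hQC : ∀ (b : Torus d) (x : ℝ), |Q b x| ≤ QC)
    (hQLip : ∀ (b : Torus d) (x y : ℝ), |Q b x - Q b y| ≤ LQ * |x - y|)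
    (hQHol : ∀ (b₁ b₂ : Torus d) (x : ℝ), |Q b₁ x - Q b₂ x| ≤ CQ * dist b₁ b₂ ^ α)
    (A Aα : ℝ) (hA : 0 < A) (hAα : 0 < Aα)
    (ε : ℝ) (hε : 0 < ε) (hε1 : ε ≤ 1)
    (h : Torus d → ℝ → ℝ)
    (hcont : ContinuousOn (fun p : Torus d × ℝ => h p.1 p.2) (univ ×ˢ Icc 0 ε))
    (hbC : ∀ b : Torus d, ∀ x ∈ Icc (0:ℝ) ε, |h b x| ≤ A)
    (hbHol : ∀ b₁ b₂ : Torus d, ∀ x ∈ Icc (0:ℝ) ε,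
      |h b₁ x - h b₂ x| ≤ Aα * dist b₁ b₂ ^ α) :
    ∀ b₁ b₂ : Torus d, ∀ x ∈ Icc (0:ℝ) ε,
      |shiftOp Q h b₁ x - shiftOp Q h b₂ x| ≤
        ((LQ * ε ^ 2 + 2 * ε ^ 3 * A * LQ + 2 * ε * QC + ε ^ 4 * A ^ 2 * LQ
            + 2 * QC * A * ε ^ 2) * Aα
          + (CQ + 2 * ε * A * CQ + ε ^ 2 * A ^ 2 * CQ)) * dist b₁ b₂ ^ α := by

  intro b₁ b₂ x hx
  obtain ⟨hx0, hxε⟩ := hx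
  have hε0 : (0:ℝ) ≤ ε := hε.le
  have hD0 : 0 ≤ dist b₁ b₂ ^ α := Real.rpow_nonneg dist_nonneg α
  set D := dist b₁ b₂ ^ α with hDdef
  have e1 : |h b₁ x| ≤ A := hbC b₁ x ⟨hx0, hxε⟩
  have e2 : |h b₂ x| ≤ A := hbC b₂ x ⟨hx0, hxε⟩
  have eH : |h b₁ x - h b₂ x| ≤ Aα * D := hbHol b₁ b₂ x ⟨hx0, hxε⟩
  set h₁ := h b₁ x
  set h₂ := h b₂ x
  set y₁ := x + x ^ 2 * h₁ with hy₁
  set y₂ := x + x ^ 2 * h₂ with hy₂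
  -- bound on (1 + x h₁)²
  have hsq : |(1 + x * h₁) ^ 2| ≤ (1 + ε * A) ^ 2 := by
    rw [abs_pow]
    refine pow_le_pow_left₀ (abs_nonneg _) ?_ 2
    calc |1 + x * h₁| ≤ |(1:ℝ)| + |x * h₁| := abs_add_le _ _
      _ ≤ 1 + ε * A := by
          rw [abs_one, abs_mul, abs_of_nonneg hx0]
          have := mul_le_mul hxε e1 (abs_nonneg _) hε0
          linarith
  -- bound on the Lipschitz difference
  have hLip : |Q b₁ y₁ - Q b₁ y₂| ≤ LQ * (ε ^ 2 * (Aα * D)) := by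
    have h1 : |y₁ - y₂| ≤ ε ^ 2 * (Aα * D) := by
      have : y₁ - y₂ = x ^ 2 * (h₁ - h₂) := by rw [hy₁, hy₂]; ring
      rw [this]
      have hx2 : |x ^ 2| ≤ ε ^ 2 := by
        rw [abs_of_nonneg (sq_nonneg x)]
        exact pow_le_pow_left₀ hx0 hxε 2
      exact abs_mul_le' hx2 eH
    calc |Q b₁ y₁ - Q b₁ y₂| ≤ LQ * |y₁ - y₂| := hQLip b₁ y₁ y₂
      _ ≤ LQ * (ε ^ 2 * (Aα * D)) := by
        have hLQ0 : 0 ≤ LQ := by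
          have := hQLip b₁ 0 1
          have h0 : (0:ℝ) ≤ |Q b₁ 0 - Q b₁ 1| := abs_nonneg _
          simp at this
          linarith
        exact mul_le_mul_of_nonneg_left h1 hLQ0
  have hHol : |Q b₁ y₂ - Q b₂ y₂| ≤ CQ * D := hQHol b₁ b₂ y₂
  -- bound on the square difference
  have hsqd : |(1 + x * h₁) ^ 2 - (1 + x * h₂) ^ 2| ≤ (ε * (Aα * D)) * (2 + 2 * ε * A) := by
    have : (1 + x * h₁) ^ 2 - (1 + x * h₂) ^ 2 = (x * (h₁ - h₂)) * (2 + x * (h₁ + h₂)) := by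
      ring
    rw [this]
    refine abs_mul_le' ?_ ?_
    · rw [abs_mul, abs_of_nonneg hx0]
      exact mul_le_mul hxε eH (abs_nonneg _) hε0
    · calc |2 + x * (h₁ + h₂)| ≤ |(2:ℝ)| + |x * (h₁ + h₂)| := abs_add_le _ _
        _ ≤ 2 + 2 * ε * A := by
          rw [abs_mul, abs_of_nonneg hx0]
          have h12 : |h₁ + h₂| ≤ 2 * A := by
            calc |h₁ + h₂| ≤ |h₁| + |h₂| := abs_add_le _ _
              _ ≤ 2 * A := by linarith
          have := mul_le_mul hxε h12 (abs_nonneg _) hε0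
          have h2 : |(2:ℝ)| = 2 := by norm_num
          rw [h2]
          linarith
  have hQb : |Q b₂ y₂| ≤ QC := hQC b₂ y₂
  -- decomposition
  have hdec : shiftOp Q h b₁ x - shiftOp Q h b₂ x
      = (1 + x * h₁) ^ 2 * (Q b₁ y₁ - Q b₁ y₂)
        + (1 + x * h₁) ^ 2 * (Q b₁ y₂ - Q b₂ y₂)
        + ((1 + x * h₁) ^ 2 - (1 + x * h₂) ^ 2) * Q b₂ y₂ := by
    simp only [shiftOp, hy₁, hy₂]
    ring
  calc |shiftOp Q h b₁ x - shiftOp Q h b₂ x|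
      ≤ |(1 + x * h₁) ^ 2 * (Q b₁ y₁ - Q b₁ y₂)|
        + |(1 + x * h₁) ^ 2 * (Q b₁ y₂ - Q b₂ y₂)|
        + |((1 + x * h₁) ^ 2 - (1 + x * h₂) ^ 2) * Q b₂ y₂| := by
        rw [hdec]; exact (abs_add_le _ _).trans (by gcongr <;> exact abs_add_le _ _)
    _ ≤ (1 + ε * A) ^ 2 * (LQ * (ε ^ 2 * (Aα * D)))
        + (1 + ε * A) ^ 2 * (CQ * D)
        + ((ε * (Aα * D)) * (2 + 2 * ε * A)) * QC := by
        gcongr ?_ + ?_ + ?_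
        · exact abs_mul_le' hsq hLip
        · exact abs_mul_le' hsq hHol
        · exact abs_mul_le' hsqd hQb
    _ = ((LQ * ε ^ 2 + 2 * ε ^ 3 * A * LQ + 2 * ε * QC + ε ^ 4 * A ^ 2 * LQ
            + 2 * QC * A * ε ^ 2) * Aα
          + (CQ + 2 * ε * A * CQ + ε ^ 2 * A ^ 2 * CQ)) * D := by ring
end
end
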